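/- arXiv:2309.15007 — 2 statements merged into one kernel-verified Lean document; each statement's English description precedes it below -/
import Mathlib

section
/- Let c be a nonzero integer and let d ≥ 2 be an integer. If m is a natural number with m > 2·|c|, then there is no integer x satisfying c·(2m+1)! = 2^m · m! · x^d. -/
/-!
Bertrand's postulate gives a prime `p` with `m < p ≤ 2m`. Then `p` divides `(2m+1)!` exactly
once, while it divides neither `c` (as `p > m > |c|`) nor `2^m · m!`. So `p ∣ x`, whence
`p^2 ∣ x^d ∣ c·(2m+1)!`, and then `p^2 ∣ (2m+1)!`, a contradiction.
-/

open Nat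

theorem Nat.Prime.not_sq_dvd_factorial {p n : ℕ} (hp : p.Prime) (hn : n < 2 * p) :
    ¬ p ^ 2 ∣ n ! := by
  have hlog : log p n < 2 :=
    log_lt_of_lt_pow' two_ne_zero (hn.trans_le (by nlinarith [hp.two_le]))
  rw [hp.pow_dvd_factorial_iff hlog, Finset.sum_Ico_succ_top le_rfl, Finset.Ico_self,
    Finset.sum_empty, zero_add, pow_one, not_le]
  exact Nat.div_lt_of_lt_mul (by rwa [mul_comm])

theorem Prime.mul_ne_mul_pow_of_dvd_of_not_sq_dvd {M : Type*} [CommMonoidWithZero M]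
    [IsCancelMulZero M] {p a b N x : M} {d : ℕ} (hp : Prime p) (ha : ¬ p ∣ a) (hb : ¬ p ∣ b) (hN : p ∣ N)
    (hN2 : ¬ p ^ 2 ∣ N) (hd : 2 ≤ d) : a * N ≠ b * x ^ d := by
  intro h
  have hx : p ∣ x :=
    hp.dvd_of_dvd_pow ((hp.dvd_or_dvd (h ▸ dvd_mul_of_dvd_right hN a)).resolve_left hb)
  have hsq : p ^ 2 ∣ a * N :=
    h ▸ dvd_mul_of_dvd_right ((pow_dvd_pow_of_dvd hx 2).trans (pow_dvd_pow x hd)) b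
  exact hN2 (hp.pow_dvd_of_dvd_mul_left 2 ha hsq)

/-- Let `c` be a nonzero integer and `d ≥ 2` an integer. If `m`
is a natural number with `m > 2·|c|`, then there is no integer `x` with
`c·(2m+1)! = 2^m · m! · x^d`. -/
theorem stmt_16 (c : ℤ) (hc : c ≠ 0) (d : ℕ) (hd : 2 ≤ d) (m : ℕ)
    (hm : 2 * c.natAbs < m) :
    ¬ ∃ x : ℤ, c * (Nat.factorial (2 * m + 1) : ℤ)
      = 2 ^ m * (Nat.factorial m : ℤ) * x ^ d := by
  rintro ⟨x, hx⟩
  have hc1 : 0 < c.natAbs := Int.natAbs_pos.mpr hc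
  obtain ⟨p, hp, hmp, hpm⟩ := exists_prime_lt_and_le_two_mul m (by omega)
  have hpZ : Prime (p : ℤ) := Nat.prime_iff_prime_int.mp hp
  have hpc : ¬ (p : ℤ) ∣ c := fun h => by
    have := Nat.le_of_dvd hc1 (Int.natCast_dvd.mp h)
    omega
  have hptwo : ¬ (p : ℤ) ∣ 2 ^ m := fun h => by
    have := Int.le_of_dvd two_pos (hpZ.dvd_of_dvd_pow h)
    omega
  have hpfact : ¬ (p : ℤ) ∣ (m ! : ℤ) := fun h => by
    have := (hp.dvd_factorial).mp (Int.natCast_dvd_natCast.mp h)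
    omega
  refine hpZ.mul_ne_mul_pow_of_dvd_of_not_sq_dvd hpc
    (fun h => (hpZ.dvd_or_dvd h).elim hptwo hpfact) ?_ ?_ hd hx
  · exact Int.natCast_dvd_natCast.mpr (Nat.dvd_factorial hp.pos (by omega))
  · exact_mod_cast hp.not_sq_dvd_factorial (by omega)
end

section
/- There exists a natural number M such that for all natural numbers m ≥ M, the product of all primes p satisfying m/2 < p ≤ m is strictly greater than 2^{m/2} + 1. -/
/-!
Chebyshev's method. Since `log n! = ∑_{d ≤ n} ⌊n/d⌋ Λ(d)`, the combination
`E(n) = log (n! (n/30)! / ((n/2)! (n/3)! (n/5)!))` equals `∑_{d ≤ n} w(⌊n/d⌋) Λ(d)`,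
where `w(q) = q - ⌊q/2⌋ - ⌊q/3⌋ - ⌊q/5⌋ + ⌊q/30⌋` takes only the values `0` and `1` and is
`1` on `[1, 5]`. Hence `ψ(n) - ψ(n/6) ≤ E(n) ≤ ψ(n)`, while Stirling's formula gives
`E(n) = A n + O(log n)` with `A = log 2/2 + log 3/3 + log 5/5 - log 30/30 ≈ 0.921`.
So `ψ(n) ≥ (A - ε) n` eventually and, iterating `n ↦ n/6`, `ψ(x) ≤ (6/5)(A + ε) x + O(1)`.
As `ψ - θ = O(√x log x)`, this gives `θ(m) - θ(m/2) ≥ (2A/5 - 8ε/5) m - o(m)`, and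
`2A/5 > (log 2)/2` because `2^47 < 3^18 5^10`.
-/

open Real Finset Filter Asymptotics Chebyshev
open ArithmeticFunction hiding log
open scoped Nat

theorem log_factorial_eq_sum_vonMangoldt {n N : ℕ} (h : n ≤ N) :
    log (n ! : ℝ) = ∑ d ∈ Ioc 0 N, ((n / d : ℕ) : ℝ) * Λ d := by
  induction n with
  | zero => simp
  | succ n ih =>
    have hdiv : (Ioc 0 N).filter (· ∣ n + 1) = (n + 1).divisors := by
      ext d
      simp only [mem_filter, mem_Ioc, Nat.mem_divisors]
      constructor
      · rintro ⟨-, hd⟩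
        exact ⟨hd, n.succ_ne_zero⟩
      · rintro ⟨hd, -⟩
        exact ⟨⟨Nat.pos_of_dvd_of_pos hd n.succ_pos,
          (Nat.le_of_dvd n.succ_pos hd).trans h⟩, hd⟩
    simp only [Nat.succ_div, Nat.cast_add, add_mul, sum_add_distrib, ← ih (by omega),
      Nat.cast_ite, Nat.cast_one, Nat.cast_zero, ite_mul, one_mul, zero_mul]
    rw [← sum_filter, hdiv, vonMangoldt_sum, Nat.factorial_succ, Nat.cast_mul,
      log_mul (by positivity) (by positivity), add_comm]

def chebyshevWeight (q : ℕ) : ℤ :=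
  q - (q / 2 : ℕ) - (q / 3 : ℕ) - (q / 5 : ℕ) + (q / 30 : ℕ)

theorem chebyshevWeight_nonneg (q : ℕ) : 0 ≤ chebyshevWeight q := by
  unfold chebyshevWeight; omega

theorem chebyshevWeight_le_one (q : ℕ) : chebyshevWeight q ≤ 1 := by
  unfold chebyshevWeight; omega

theorem chebyshevWeight_eq_one {q : ℕ} (h1 : 1 ≤ q) (h5 : q ≤ 5) : chebyshevWeight q = 1 := by
  unfold chebyshevWeight; omega

noncomputable def chebyshevE (n : ℕ) : ℝ :=
  log (n ! : ℝ) - log ((n / 2)! : ℝ) - log ((n / 3)! : ℝ) - log ((n / 5)! : ℝ)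
    + log ((n / 30)! : ℝ)

theorem chebyshevE_eq_sum (n : ℕ) :
    chebyshevE n = ∑ d ∈ Ioc 0 n, (chebyshevWeight (n / d) : ℝ) * Λ d := by
  have hdiv : ∀ k, log ((n / k)! : ℝ) = ∑ d ∈ Ioc 0 n, ((n / d / k : ℕ) : ℝ) * Λ d := by
    intro k
    rw [log_factorial_eq_sum_vonMangoldt (Nat.div_le_self n k)]
    refine sum_congr rfl fun d _ => ?_
    rw [Nat.div_div_eq_div_mul, Nat.div_div_eq_div_mul, Nat.mul_comm k]
  rw [chebyshevE, hdiv, hdiv, hdiv, hdiv, log_factorial_eq_sum_vonMangoldt le_rfl,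
    ← sum_sub_distrib, ← sum_sub_distrib, ← sum_sub_distrib, ← sum_add_distrib]
  refine sum_congr rfl fun d _ => ?_
  simp only [chebyshevWeight, Int.cast_add, Int.cast_sub, Int.cast_natCast]
  ring

theorem psi_natCast_eq_sum (n : ℕ) : ψ n = ∑ d ∈ Ioc 0 n, Λ d := by
  simp [psi]

theorem chebyshevE_le_psi (n : ℕ) : chebyshevE n ≤ ψ n := by
  rw [chebyshevE_eq_sum, psi_natCast_eq_sum]
  refine sum_le_sum fun d _ => mul_le_of_le_one_left vonMangoldt_nonneg ?_
  exact_mod_cast chebyshevWeight_le_one _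

theorem psi_sub_psi_div_six_le_chebyshevE (n : ℕ) : ψ n - ψ (n / 6 : ℕ) ≤ chebyshevE n := by
  have hwin : ψ n - ψ (n / 6 : ℕ) = ∑ d ∈ Ioc (n / 6) n, Λ d := by
    rw [psi_natCast_eq_sum, psi_natCast_eq_sum,
      ← sum_Ioc_consecutive _ (Nat.zero_le _) (Nat.div_le_self n 6)]
    ring
  rw [hwin, chebyshevE_eq_sum, ← sum_Ioc_consecutive _ (Nat.zero_le _) (Nat.div_le_self n 6)]
  have hlow : 0 ≤ ∑ d ∈ Ioc 0 (n / 6), (chebyshevWeight (n / d) : ℝ) * Λ d :=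
    sum_nonneg fun d _ =>
      mul_nonneg (by exact_mod_cast chebyshevWeight_nonneg _) vonMangoldt_nonneg
  have hhigh : ∑ d ∈ Ioc (n / 6) n, (chebyshevWeight (n / d) : ℝ) * Λ d =
      ∑ d ∈ Ioc (n / 6) n, Λ d := by
    refine sum_congr rfl fun d hd => ?_
    obtain ⟨hd6, hdn⟩ := mem_Ioc.mp hd
    have hd0 : 0 < d := by omega
    rw [chebyshevWeight_eq_one (Nat.div_pos hdn hd0) (Nat.lt_succ_iff.mp
      ((Nat.div_lt_iff_lt_mul hd0).mpr (by omega))), Int.cast_one, one_mul]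
  linarith

theorem log_factorial_le {n : ℕ} (hn : n ≠ 0) :
    log (n ! : ℝ) ≤ n * log n - n + log n / 2 + 1 := by
  obtain ⟨k, rfl⟩ := Nat.exists_eq_succ_of_ne_zero hn
  have hmono : log (Stirling.stirlingSeq (k + 1)) ≤ log (Stirling.stirlingSeq 1) :=
    Stirling.log_stirlingSeq'_antitone (Nat.zero_le k)
  have hk : (0 : ℝ) < k + 1 := by positivity
  rw [Stirling.log_stirlingSeq_formula, Stirling.stirlingSeq_one, log_div (exp_pos 1).ne'
    (by positivity), log_exp, log_sqrt (by norm_num), log_mul (by norm_num) (by positivity),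
    log_div (by positivity) (exp_pos 1).ne', log_exp] at hmono
  push_cast at hmono ⊢
  linarith

theorem mul_log_sub_self_le_mul_log_sub_self {b x : ℝ} (hb : 1 ≤ b) (hbx : b ≤ x) :
    b * log b - b ≤ x * log x - x := by
  have hx : 0 < x := by linarith
  have h := log_le_sub_one_of_pos (div_pos (by linarith : 0 < b) hx)
  rw [log_div (by linarith) hx.ne'] at h
  have h' : x * (log b - log x) ≤ b - x :=
    calc x * (log b - log x) ≤ x * (b / x - 1) := mul_le_mul_of_nonneg_left h hx.le
      _ = b - x := by field_simp
  nlinarith [log_nonneg hb]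

theorem mul_log_sub_self_sub_le {b x : ℝ} (hb : 0 < b) (hbx : b ≤ x) :
    x * log x - x - (b * log b - b) ≤ (x - b) * log x := by
  have h := log_le_sub_one_of_pos (div_pos (hb.trans_le hbx) hb)
  rw [log_div (by linarith) hb.ne'] at h
  have h' : b * (log x - log b) ≤ x - b :=
    calc b * (log x - log b) ≤ b * (x / b - 1) := mul_le_mul_of_nonneg_left h hb.le
      _ = x - b := by field_simp
  nlinarith

theorem abs_log_factorial_floor_sub_le {x : ℝ} (hx : 1 ≤ x) :
    |log (⌊x⌋₊ ! : ℝ) - (x * log x - x)| ≤ log x + 1 := by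
  have hb1 : (1 : ℝ) ≤ ⌊x⌋₊ := by exact_mod_cast Nat.one_le_floor_iff x |>.mpr hx
  have hbx : (⌊x⌋₊ : ℝ) ≤ x := Nat.floor_le (by linarith)
  have hxb : x - ⌊x⌋₊ ≤ 1 := by linarith [Nat.lt_floor_add_one x]
  have hb0 : ⌊x⌋₊ ≠ 0 := by exact_mod_cast (by linarith : (⌊x⌋₊ : ℝ) ≠ 0)
  have hlogb : log ⌊x⌋₊ ≤ log x := log_le_log (by linarith) hbx
  have hlogx : 0 ≤ log x := log_nonneg hx
  have hupper := log_factorial_le hb0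
  have hlower := Stirling.le_log_factorial_stirling hb0
  have hmono := mul_log_sub_self_le_mul_log_sub_self hb1 hbx
  have hgap := mul_log_sub_self_sub_le (by linarith) hbx
  have hlog2pi : 0 ≤ log (2 * π) := log_nonneg (by nlinarith [pi_gt_three])
  rw [abs_le]
  constructor <;> nlinarith [log_nonneg hb1]

noncomputable def chebyshevConst : ℝ := log 2 / 2 + log 3 / 3 + log 5 / 5 - log 30 / 30

theorem mul_log_sub_self_combination {x : ℝ} (hx : x ≠ 0) :
    (x * log x - x) - (x / 2 * log (x / 2) - x / 2) - (x / 3 * log (x / 3) - x / 3)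
      - (x / 5 * log (x / 5) - x / 5) + (x / 30 * log (x / 30) - x / 30)
      = chebyshevConst * x := by
  rw [log_div hx (by norm_num), log_div hx (by norm_num), log_div hx (by norm_num),
    log_div hx (by norm_num), chebyshevConst]
  ring

theorem abs_chebyshevE_sub_le {n : ℕ} (hn : 30 ≤ n) :
    |chebyshevE n - chebyshevConst * n| ≤ 5 * (log n + 1) := by
  have hn0 : (0 : ℝ) < n := by exact_mod_cast (by omega : 0 < n)
  have hterm : ∀ k : ℕ, 0 < k → k ≤ 30 →
      |log ((n / k)! : ℝ) - ((n : ℝ) / k * log ((n : ℝ) / k) - (n : ℝ) / k)| ≤ log n + 1 := by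
    intro k hk hk30
    have hk1 : (1 : ℝ) ≤ k := by exact_mod_cast hk
    have hx : 1 ≤ (n : ℝ) / k := by
      rw [le_div_iff₀ (by positivity), one_mul]; exact_mod_cast (by omega : k ≤ n)
    have hlog : log ((n : ℝ) / k) ≤ log n := log_le_log (by linarith) (div_le_self hn0.le hk1)
    have h := abs_log_factorial_floor_sub_le hx
    rw [Nat.floor_div_eq_div] at h
    linarith
  have h1 := hterm 1 one_pos (by norm_num)
  have h2 := hterm 2 two_pos (by norm_num)
  have h3 := hterm 3 three_pos (by norm_num)
  have h5 := hterm 5 (by norm_num) (by norm_num)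
  have h30 := hterm 30 (by norm_num) le_rfl
  simp only [Nat.div_one, Nat.cast_one, div_one, Nat.cast_ofNat] at h1 h2 h3 h5 h30
  rw [chebyshevE, ← mul_log_sub_self_combination hn0.ne']
  rw [abs_le] at h1 h2 h3 h5 h30 ⊢
  constructor <;> linarith

theorem log_two_div_two_lt_chebyshevConst : log 2 / 2 < 2 / 5 * chebyshevConst := by
  have h : log ((2 : ℝ) ^ 47) < log ((3 : ℝ) ^ 18 * 5 ^ 10) :=
    log_lt_log (by norm_num) (by norm_num)
  rw [log_mul (by norm_num) (by norm_num), log_pow, log_pow, log_pow] at h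
  rw [chebyshevConst, show (30 : ℝ) = 2 * 3 * 5 by norm_num,
    log_mul (by norm_num) (by norm_num), log_mul (by norm_num) (by norm_num)]
  push_cast at h
  linarith

theorem exists_le_mul_add_of_le_div_add {f : ℕ → ℝ} {c : ℝ} {k N : ℕ} (hc : 0 ≤ c)
    (hk : 1 < k) (h : ∀ n ≥ N, f n ≤ f (n / k) + c * n) :
    ∃ C, ∀ n, f n ≤ k / (k - 1) * c * n + C := by
  obtain ⟨C, hC⟩ := ((Set.finite_Iio (max N 1)).image f).bddAbove
  have hk1 : (0 : ℝ) < k - 1 := by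
    have : (1 : ℝ) < k := by exact_mod_cast hk
    linarith
  have hcoef : 0 ≤ k / (k - 1) * c := by positivity
  refine ⟨C, fun n => ?_⟩
  induction n using Nat.strong_induction_on with
  | _ n ih =>
    rcases lt_or_ge n (max N 1) with hn | hn
    · exact (hC ⟨n, hn, rfl⟩).trans (le_add_of_nonneg_left (by positivity))
    · have hdiv : n / k < n := Nat.div_lt_self (by omega) hk
      have hcast : ((n / k : ℕ) : ℝ) ≤ n / k := Nat.cast_div_le
      calc f n ≤ f (n / k) + c * n := h n (le_of_max_le_left hn)
        _ ≤ k / (k - 1) * c * (n / k : ℕ) + C + c * n := by gcongr; exact ih _ hdiv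
        _ ≤ k / (k - 1) * c * (n / k) + C + c * n := by gcongr
        _ = k / (k - 1) * c * n + C := by field_simp; ring

theorem eventually_abs_chebyshevE_sub_le {ε : ℝ} (hε : 0 < ε) :
    ∀ᶠ n : ℕ in atTop, |chebyshevE n - chebyshevConst * n| ≤ ε * n := by
  have hlittle : (fun x => 5 * (log x + 1)) =o[atTop] id :=
    (isLittleO_log_id_atTop.add (isLittleO_const_id_atTop 1)).const_mul_left 5
  filter_upwards [tendsto_natCast_atTop_atTop.eventually (hlittle.bound hε),
    eventually_ge_atTop 30] with n hbound hn30
  have hlog : 0 ≤ log (n : ℝ) := log_nonneg (by exact_mod_cast (by omega : 1 ≤ n))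
  rw [Real.norm_of_nonneg (by positivity), id, Real.norm_of_nonneg (by linarith)] at hbound
  exact (abs_chebyshevE_sub_le hn30).trans hbound

theorem eventually_sub_mul_le_psi {ε : ℝ} (hε : 0 < ε) :
    ∀ᶠ n : ℕ in atTop, (chebyshevConst - ε) * n ≤ ψ n := by
  filter_upwards [eventually_abs_chebyshevE_sub_le hε] with n hn
  linarith [(abs_le.mp hn).1, chebyshevE_le_psi n]

theorem exists_psi_le_add_mul {ε : ℝ} (hε : 0 < ε) :
    ∃ C, ∀ x, 0 ≤ x → ψ x ≤ 6 / 5 * (chebyshevConst + ε) * x + C := by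
  obtain ⟨N, hN⟩ := eventually_atTop.mp (eventually_abs_chebyshevE_sub_le hε)
  have hrec : ∀ n ≥ N, ψ n ≤ ψ (n / 6 : ℕ) + (chebyshevConst + ε) * n := fun n hn => by
    linarith [psi_sub_psi_div_six_le_chebyshevE n, (abs_le.mp (hN n hn)).2]
  have hconst : 0 ≤ chebyshevConst + ε := by
    linarith [log_two_div_two_lt_chebyshevConst, log_pos one_lt_two]
  obtain ⟨C, hC⟩ := exists_le_mul_add_of_le_div_add hconst (by norm_num : 1 < 6) hrec
  refine ⟨C, fun x hx => ?_⟩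
  have hfloor : (⌊x⌋₊ : ℝ) ≤ x := Nat.floor_le hx
  calc ψ x = ψ ⌊x⌋₊ := psi_eq_psi_coe_floor x
    _ ≤ 6 / (6 - 1) * (chebyshevConst + ε) * ⌊x⌋₊ + C := by exact_mod_cast hC ⌊x⌋₊
    _ ≤ 6 / 5 * (chebyshevConst + ε) * x + C := by norm_num; gcongr

theorem isLittleO_sqrt_mul_log_id : (fun x => √x * log x) =o[atTop] id := by
  have hlog : log =o[atTop] (√·) := by
    simpa only [← sqrt_eq_rpow] using isLittleO_log_rpow_atTop (r := 1 / 2) (by norm_num)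
  refine ((isBigO_refl _ _).mul_isLittleO hlog).congr' EventuallyEq.rfl ?_
  filter_upwards [eventually_ge_atTop 0] with x hx
  exact mul_self_sqrt hx

theorem eventually_theta_sub_theta_half :
    ∀ᶠ m : ℕ in atTop, ((m : ℝ) / 2 + 1) * log 2 < θ m - θ ((m : ℝ) / 2) := by
  obtain ⟨δ, hδ, hδA⟩ : ∃ δ, 0 < δ ∧ 2 / 5 * chebyshevConst = log 2 / 2 + δ :=
    ⟨_, sub_pos.mpr log_two_div_two_lt_chebyshevConst, by ring⟩
  obtain ⟨C, hC⟩ := exists_psi_le_add_mul (ε := δ / 4) (by positivity)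
  have hlittle : (fun x => 2 * (√x * log x) + (C + log 2)) =o[atTop] id :=
    (isLittleO_sqrt_mul_log_id.const_mul_left 2).add (isLittleO_const_id_atTop _)
  filter_upwards [eventually_sub_mul_le_psi (ε := δ / 4) (by positivity),
    tendsto_natCast_atTop_atTop.eventually (hlittle.bound (c := δ / 2) (by positivity)),
    eventually_ge_atTop 1] with m hlower hsmall hm
  have hm1 : (1 : ℝ) ≤ m := by exact_mod_cast hm
  rw [norm_eq_abs, id, norm_eq_abs, Nat.abs_cast] at hsmall
  have hψθ := psi_sub_theta_le hm1
  have hθψ := theta_le_psi ((m : ℝ) / 2)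
  have hupper := hC ((m : ℝ) / 2) (by positivity)
  have hδm : 0 < δ * m := by positivity
  have hδAm : 2 / 5 * chebyshevConst * m = (log 2 / 2 + δ) * m := by rw [hδA]
  linarith [le_abs_self (2 * (√(m : ℝ) * log m) + (C + log 2))]

theorem theta_sub_theta_half_eq_sum (m : ℕ) :
    θ m - θ ((m : ℝ) / 2) =
      ∑ p ∈ (Finset.range (m + 1)).filter (fun p => p.Prime ∧ m < 2 * p), log p := by
  have hwindow : (Finset.range (m + 1)).filter (fun p => p.Prime ∧ m < 2 * p) =
      (Ioc (m / 2) m).filter Nat.Prime := by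
    ext p
    simp only [mem_filter, mem_range, mem_Ioc]
    constructor
    · rintro ⟨hpm, hp, hmp⟩
      exact ⟨⟨by omega, by omega⟩, hp⟩
    · rintro ⟨⟨hmp, hpm⟩, hp⟩
      exact ⟨by omega, hp, by omega⟩
  rw [theta_eq_theta_coe_floor ((m : ℝ) / 2), Nat.floor_div_ofNat, Nat.floor_natCast, theta,
    theta, Nat.floor_natCast, Nat.floor_natCast, hwindow, sum_filter, sum_filter, sum_filter,
    ← sum_Ioc_consecutive _ (Nat.zero_le _) (Nat.div_le_self m 2)]
  ring

/-- There is `M : ℕ` such that for all `m ≥ M`, the product of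
all primes `p` with `m/2 < p ≤ m` exceeds `2^{m/2} + 1`. -/
theorem stmt_17 :
    ∃ M : ℕ, ∀ m : ℕ, M ≤ m →
      (2 : ℝ) ^ ((m : ℝ) / 2) + 1 <
        ∏ p ∈ (Finset.range (m + 1)).filter (fun p => p.Prime ∧ m < 2 * p),
          (p : ℝ) := by
  obtain ⟨M, hM⟩ := eventually_atTop.mp eventually_theta_sub_theta_half
  refine ⟨M, fun m hm => ?_⟩
  have hprod : ∏ p ∈ (Finset.range (m + 1)).filter (fun p => p.Prime ∧ m < 2 * p), (p : ℝ) =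
      exp (θ m - θ ((m : ℝ) / 2)) := by
    rw [theta_sub_theta_half_eq_sum, exp_sum]
    refine prod_congr rfl fun p hp => (exp_log ?_).symm
    exact_mod_cast (mem_filter.mp hp).2.1.pos
  have hpow : 1 ≤ (2 : ℝ) ^ ((m : ℝ) / 2) := one_le_rpow one_le_two (by positivity)
  calc (2 : ℝ) ^ ((m : ℝ) / 2) + 1 ≤ 2 ^ ((m : ℝ) / 2 + 1) := by
        rw [rpow_add_one two_ne_zero]; linarith
    _ = exp (((m : ℝ) / 2 + 1) * log 2) := by rw [rpow_def_of_pos two_pos, mul_comm]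
    _ < _ := by rw [hprod]; exact exp_lt_exp.mpr (hM m hm)
end
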